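/- Let F and B be n × n column-stochastic matrices, let 0 < α₁, α₂, α₃ < 1, and let d ∈ ℝⁿ. Then there exists a vector t ∈ ℝⁿ satisfying the RepRank equation t = α₁ F P₊(t) + α₂ B P₋(t) + α₃ d. -/

import Mathlib

open Finset Filter

/-- Replace negative components by zero. -/
def Ppos {n : ℕ} (t : Fin n → ℝ) : Fin n → ℝ := fun i => max (t i) 0

/-- Replace positive components by zero. -/
def Pneg {n : ℕ} (t : Fin n → ℝ) : Fin n → ℝ := fun i => min (t i) 0

/-- ℓ¹ norm on ℝⁿ. -/
def l1 {n : ℕ} (x : Fin n → ℝ) : ℝ := ∑ i, |x i|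

/-- A matrix is column-stochastic if entries are nonnegative and each column sums to 1. -/
def ColStochastic {n : ℕ} (F : Matrix (Fin n) (Fin n) ℝ) : Prop :=
  (∀ i j, 0 ≤ F i j) ∧ ∀ j, ∑ i, F i j = 1

/-! The RepRank map `t ↦ α₁ F P₊(t) + α₂ B P₋(t) + α₃ d` is a contraction for the ℓ¹ norm with
constant `max α₁ α₂ < 1`: column-stochastic matrices do not increase ℓ¹ norms, and
`|P₊(x) - P₊(y)| + |P₋(x) - P₋(y)| = |x - y|` componentwise, since `P₊` and `P₋` are monotone and
add up to the identity. Banach's fixed point theorem gives the solution. -/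

open Matrix

lemma abs_max_sub_max_add_abs_min_sub_min (a b : ℝ) :
    |max a 0 - max b 0| + |min a 0 - min b 0| = |a - b| := by
  grind

lemma l1_nonneg {n : ℕ} (x : Fin n → ℝ) : 0 ≤ l1 x :=
  sum_nonneg fun i _ => abs_nonneg (x i)

lemma l1_add_le {n : ℕ} (x y : Fin n → ℝ) : l1 (x + y) ≤ l1 x + l1 y := by
  rw [l1, l1, l1, ← sum_add_distrib]
  exact sum_le_sum fun i _ => abs_add_le (x i) (y i)

lemma l1_smul {n : ℕ} (c : ℝ) (x : Fin n → ℝ) : l1 (c • x) = |c| * l1 x := by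
  simp only [l1, Pi.smul_apply, smul_eq_mul, abs_mul, mul_sum]

lemma l1_sub_Ppos_add_l1_sub_Pneg {n : ℕ} (x y : Fin n → ℝ) :
    l1 (Ppos x - Ppos y) + l1 (Pneg x - Pneg y) = l1 (x - y) := by
  simp only [l1, Ppos, Pneg, Pi.sub_apply, ← sum_add_distrib,
    abs_max_sub_max_add_abs_min_sub_min]

lemma ColStochastic.l1_mulVec_le {n : ℕ} {F : Matrix (Fin n) (Fin n) ℝ} (hF : ColStochastic F)
    (x : Fin n → ℝ) : l1 (F *ᵥ x) ≤ l1 x :=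
  calc l1 (F *ᵥ x) = ∑ i, |∑ j, F i j * x j| := rfl
    _ ≤ ∑ i, ∑ j, F i j * |x j| := sum_le_sum fun i _ =>
        (abs_sum_le_sum_abs _ _).trans_eq <| sum_congr rfl fun j _ => by
          rw [abs_mul, abs_of_nonneg (hF.1 i j)]
    _ = ∑ j, (∑ i, F i j) * |x j| := by rw [sum_comm]; simp only [sum_mul]
    _ = l1 x := by simp only [hF.2, one_mul, l1]

lemma l1_repRank_sub_le {n : ℕ} {F B : Matrix (Fin n) (Fin n) ℝ}
    (hF : ColStochastic F) (hB : ColStochastic B) {α₁ α₂ : ℝ} (hα₁ : 0 ≤ α₁) (hα₂ : 0 ≤ α₂)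
    (c x y : Fin n → ℝ) :
    l1 ((α₁ • F *ᵥ Ppos x + α₂ • B *ᵥ Pneg x + c) - (α₁ • F *ᵥ Ppos y + α₂ • B *ᵥ Pneg y + c))
      ≤ max α₁ α₂ * l1 (x - y) := by
  have hsub : (α₁ • F *ᵥ Ppos x + α₂ • B *ᵥ Pneg x + c) -
      (α₁ • F *ᵥ Ppos y + α₂ • B *ᵥ Pneg y + c) =
      α₁ • F *ᵥ (Ppos x - Ppos y) + α₂ • B *ᵥ (Pneg x - Pneg y) := by
    simp only [mulVec_sub, smul_sub]; abel
  have hmax : 0 ≤ max α₁ α₂ := le_max_of_le_left hα₁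
  rw [hsub, ← l1_sub_Ppos_add_l1_sub_Pneg, mul_add]
  refine (l1_add_le _ _).trans (add_le_add ?_ ?_)
  · rw [l1_smul, abs_of_nonneg hα₁]
    exact mul_le_mul (le_max_left _ _) (hF.l1_mulVec_le _) (l1_nonneg _) hmax
  · rw [l1_smul, abs_of_nonneg hα₂]
    exact mul_le_mul (le_max_right _ _) (hB.l1_mulVec_le _) (l1_nonneg _) hmax

lemma exists_fixed_of_l1_contracting {n : ℕ} (f : (Fin n → ℝ) → Fin n → ℝ) {K : ℝ}
    (hK0 : 0 ≤ K) (hK1 : K < 1) (hf : ∀ x y, l1 (f x - f y) ≤ K * l1 (x - y)) :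
    ∃ t, f t = t := by
  let g : PiLp 1 (fun _ : Fin n => ℝ) → PiLp 1 (fun _ : Fin n => ℝ) :=
    fun x => WithLp.toLp 1 (f x.ofLp)
  have hdist : ∀ x y : PiLp 1 (fun _ : Fin n => ℝ), dist x y = l1 (x.ofLp - y.ofLp) := by
    intro x y
    rw [PiLp.dist_eq_sum (by norm_num)]
    simp [Real.dist_eq, l1]
  have hg : ContractingWith ⟨K, hK0⟩ g :=
    ⟨by exact_mod_cast hK1, LipschitzWith.of_dist_le_mul fun x y => by
      rw [hdist, hdist]; exact hf x.ofLp y.ofLp⟩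
  exact ⟨_, congrArg WithLp.ofLp (hg.fixedPoint_isFixedPt (f := g))⟩

theorem repRank_exists_general {n : ℕ} (F B : Matrix (Fin n) (Fin n) ℝ)
    (hF : ColStochastic F) (hB : ColStochastic B)
    (α₁ α₂ α₃ : ℝ) (hα₁ : 0 < α₁) (hα₁' : α₁ < 1) (hα₂ : 0 < α₂) (hα₂' : α₂ < 1)
    (d : Fin n → ℝ) :
    ∃ t : Fin n → ℝ, t = α₁ • F.mulVec (Ppos t) + α₂ • B.mulVec (Pneg t) + α₃ • d := by
  obtain ⟨t, ht⟩ := exists_fixed_of_l1_contracting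
    (fun t => α₁ • F *ᵥ Ppos t + α₂ • B *ᵥ Pneg t + α₃ • d)
    (le_max_of_le_left hα₁.le) (max_lt hα₁' hα₂')
    (l1_repRank_sub_le hF hB hα₁.le hα₂.le _)
  exact ⟨t, ht.symm⟩

theorem repRank_exists {n : ℕ} (F B : Matrix (Fin n) (Fin n) ℝ)
    (hF : ColStochastic F) (hB : ColStochastic B)
    (α₁ α₂ α₃ : ℝ) (hα₁ : 0 < α₁) (hα₁' : α₁ < 1) (hα₂ : 0 < α₂) (hα₂' : α₂ < 1)
    (hα₃ : 0 < α₃) (hα₃' : α₃ < 1) (d : Fin n → ℝ) :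
    ∃ t : Fin n → ℝ, t = α₁ • F.mulVec (Ppos t) + α₂ • B.mulVec (Pneg t) + α₃ • d :=
  repRank_exists_general F B hF hB α₁ α₂ α₃ hα₁ hα₁' hα₂ hα₂' d
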